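/- arXiv:1705.09725 — 6 statements merged into one kernel-verified Lean document; each statement's English description precedes it below -/
import Mathlib

section
/- For the symmetric group S_n (n ≥ 1) equipped with the Hamming distance d_H(σ,σ') = |{i : σ(i) ≠ σ'(i)}| and the uniform measure, the subgaussian constant satisfies σ²_{S_n} ≤ n − 1. -/
open Finset

/-- Expectation of `f` under the uniform measure on a finite type. -/
noncomputable def unifE {α : Type*} [Fintype α] (f : α → ℝ) : ℝ :=
  (∑ x, f x) / (Fintype.card α)

/-- `f` is 1-Lipschitz with respect to the (ℕ-valued) distance `d`. -/
def IsLip {α : Type*} (d : α → α → ℕ) (f : α → ℝ) : Prop :=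
  ∀ x y, |f x - f y| ≤ d x y

/-- `c` is a subgaussian constant for `f` under the uniform measure. -/
def IsSubgConst {α : Type*} [Fintype α] (f : α → ℝ) (c : ℝ) : Prop :=
  ∀ t : ℝ, unifE (fun x => Real.exp (t * (f x - unifE f))) ≤ Real.exp (c * t ^ 2 / 2)

/-- The subgaussian constant of a finite metric space. -/
noncomputable def sgConst {α : Type*} [Fintype α] (d : α → α → ℕ) : ℝ :=
  sSup {s | ∃ f : α → ℝ, IsLip d f ∧ s = sInf {c | IsSubgConst f c}}

/-- Hamming distance on permutations of `Fin n`. -/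
def permHammingDist {n : ℕ} (σ τ : Equiv.Perm (Fin n)) : ℕ :=
  (Finset.univ.filter fun i => σ i ≠ τ i).card

/-!
Maurey's martingale argument, revealing `σ 0` first. Via `Equiv.Perm.decomposeFin`, `S_{n+1}` is
`Fin (n + 1) × S_n`, and on each fibre `{σ | σ 0 = p}` a 1-Lipschitz `f` is 1-Lipschitz on `S_n`,
so by induction it has subgaussian constant `n - 1` there. Left multiplication by the transposition
`(p p')` maps the fibre over `p` onto the fibre over `p'` and moves every permutation by Hamming
distance at most 2, so the fibre means of `f` oscillate by at most 2 and Hoeffding's lemma gives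
them the constant `2 ^ 2 / 4 = 1`. Subgaussian constants of the fibres and of the fibre means add.
-/

open ProbabilityTheory MeasureTheory Equiv Equiv.Perm

section UniformExpectation

variable {α : Type*} [Fintype α]

lemma unifE_mono {f g : α → ℝ} (h : ∀ x, f x ≤ g x) : unifE f ≤ unifE g :=
  div_le_div_of_nonneg_right (Finset.sum_le_sum fun x _ => h x) (Nat.cast_nonneg _)

lemma unifE_mul_const (f : α → ℝ) (c : ℝ) : unifE (fun x => f x * c) = unifE f * c := by
  simp only [unifE, ← Finset.sum_mul, div_mul_eq_mul_div]

lemma unifE_const_mul (c : ℝ) (f : α → ℝ) : unifE (fun x => c * f x) = c * unifE f := by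
  simp only [unifE, ← Finset.mul_sum, mul_div_assoc]

lemma unifE_add_const [Nonempty α] (f : α → ℝ) (c : ℝ) :
    unifE (fun x => f x + c) = unifE f + c := by
  simp [unifE, Finset.sum_add_distrib, add_div]

lemma abs_unifE_sub_unifE_le [Nonempty α] {f g : α → ℝ} {r : ℝ} (h : ∀ x, |f x - g x| ≤ r) :
    |unifE f - unifE g| ≤ r := by
  rw [abs_sub_le_iff]
  constructor
  · grw [unifE_mono (g := fun x => g x + r) fun x => by linarith [(abs_sub_le_iff.1 (h x)).1],
      unifE_add_const, add_sub_cancel_left]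
  · grw [unifE_mono (g := fun x => f x + r) fun x => by linarith [(abs_sub_le_iff.1 (h x)).2],
      unifE_add_const, add_sub_cancel_left]

lemma unifE_comp_equiv {β : Type*} [Fintype β] (e : α ≃ β) (f : β → ℝ) :
    unifE (fun x => f (e x)) = unifE f := by
  rw [unifE, unifE, Equiv.sum_comp e f, Fintype.card_congr e]

lemma unifE_prod {ι β : Type*} [Fintype ι] [Fintype β] (F : ι → β → ℝ) :
    unifE (fun x : ι × β => F x.1 x.2) = unifE fun i => unifE (F i) := by
  simp only [unifE, Fintype.sum_prod_type, Fintype.card_prod, ← Finset.sum_div, Nat.cast_mul,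
    div_div, mul_comm]

lemma unifE_eq_integral [MeasurableSpace α] [MeasurableSingletonClass α] (f : α → ℝ) :
    unifE f = ∫ x, f x ∂uniformOn Set.univ := by
  rw [integral_fintype (Integrable.of_finite), unifE, Finset.sum_div]
  refine Finset.sum_congr rfl fun x _ => ?_
  simp [uniformOn_univ, measureReal_def, div_eq_inv_mul]

end UniformExpectation

section SubgaussianConstant

variable {α : Type*} [Fintype α]

lemma IsSubgConst.nonneg [Nonempty α] {f : α → ℝ} {c : ℝ} (h : IsSubgConst f c) : 0 ≤ c := by
  have hexp : 1 ≤ Real.exp (c / 2) := calc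
    1 = unifE fun x => f x + (1 - unifE f) := by rw [unifE_add_const]; ring
    _ ≤ unifE fun x => Real.exp (1 * (f x - unifE f)) :=
      unifE_mono fun x => by rw [one_mul]; linarith [Real.add_one_le_exp (f x - unifE f)]
    _ ≤ Real.exp (c / 2) := by simpa using h 1
  linarith [Real.one_le_exp_iff.1 hexp]

/-- Hoeffding's lemma. -/
theorem isSubgConst_of_abs_sub_le [Nonempty α] {f : α → ℝ} {r : ℝ}
    (hf : ∀ x y, |f x - f y| ≤ r) : IsSubgConst f (r ^ 2 / 4) := by
  let _ : MeasurableSpace α := ⊤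
  obtain ⟨x₀, hx₀⟩ := Finite.exists_min f
  have hIcc : ∀ x, f x ∈ Set.Icc (f x₀) (f x₀ + r) := fun x =>
    ⟨hx₀ x, by linarith [le_abs_self (f x - f x₀), hf x x₀]⟩
  have hoeffding := hasSubgaussianMGF_of_mem_Icc (μ := uniformOn Set.univ)
    (measurable_of_finite f).aemeasurable (ae_of_all _ hIcc)
  intro t
  convert hoeffding.mgf_le t using 1
  · simp only [unifE_eq_integral, mgf]
  · norm_num [div_pow, sq_abs]

open Real in
theorem IsSubgConst.of_fibers {ι β : Type*} [Fintype ι] [Fintype β] (D : α ≃ ι × β)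
    {f : α → ℝ} {c c' : ℝ} (hfib : ∀ i, IsSubgConst (fun b => f (D.symm (i, b))) c)
    (havg : IsSubgConst (fun i => unifE fun b => f (D.symm (i, b))) c') :
    IsSubgConst f (c + c') := by
  set F : ι → β → ℝ := fun i b => f (D.symm (i, b))
  set g : ι → ℝ := fun i => unifE (F i)
  have hsplit (φ : α → ℝ) : unifE φ = unifE fun i => unifE fun b => φ (D.symm (i, b)) := by
    rw [← unifE_comp_equiv D.symm φ, ← unifE_prod]
  intro t
  calc unifE (fun x => exp (t * (f x - unifE f)))
      = unifE fun i => unifE (fun b => exp (t * (F i b - g i))) * exp (t * (g i - unifE g)) := by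
        rw [hsplit f, hsplit]
        refine congrArg unifE (funext fun i => ?_)
        rw [← unifE_mul_const]
        refine congrArg unifE (funext fun b => ?_)
        rw [← exp_add]
        congr 1
        ring
    _ ≤ unifE fun i => exp (c * t ^ 2 / 2) * exp (t * (g i - unifE g)) :=
        unifE_mono fun i => mul_le_mul_of_nonneg_right (hfib i t) (exp_pos _).le
    _ = exp (c * t ^ 2 / 2) * unifE fun i => exp (t * (g i - unifE g)) := unifE_const_mul _ _
    _ ≤ exp (c * t ^ 2 / 2) * exp (c' * t ^ 2 / 2) := by gcongr; exact havg t
    _ = exp ((c + c') * t ^ 2 / 2) := by rw [← exp_add]; ring_nf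

theorem sgConst_le [Nonempty α] {d : α → α → ℕ} {c : ℝ}
    (h : ∀ f, IsLip d f → IsSubgConst f c) : sgConst d ≤ c := by
  refine Real.sSup_le ?_ (IsSubgConst.nonneg (h 0 fun x y => by simp))
  rintro s ⟨f, hf, rfl⟩
  exact csInf_le ⟨0, fun c' hc' => IsSubgConst.nonneg hc'⟩ (h f hf)

end SubgaussianConstant

lemma permHammingDist_decomposeFin_symm {n : ℕ} (p : Fin (n + 1)) (e e' : Perm (Fin n)) :
    permHammingDist (decomposeFin.symm (p, e)) (decomposeFin.symm (p, e')) =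
      permHammingDist e e' := by
  simp [permHammingDist, Finset.card_filter, Fin.sum_univ_succ, decomposeFin_symm_apply_succ]

lemma permHammingDist_swap_mul_le {n : ℕ} (p p' : Fin n) (σ : Perm (Fin n)) :
    permHammingDist σ (swap p p' * σ) ≤ 2 := by
  have hsub : (Finset.univ.filter fun i => σ i ≠ (swap p p' * σ) i) ⊆ {σ⁻¹ p, σ⁻¹ p'} := by
    intro i hi
    replace hi := (Finset.mem_filter.1 hi).2
    simp only [Finset.mem_insert, Finset.mem_singleton, Perm.eq_inv_iff_eq]
    by_contra! h
    exact hi (swap_apply_of_ne_of_ne h.1 h.2).symm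
  exact (Finset.card_le_card hsub).trans Finset.card_le_two

lemma sum_decomposeFin_symm {n : ℕ} (p : Fin (n + 1)) (f : Perm (Fin (n + 1)) → ℝ) :
    ∑ e, f (decomposeFin.symm (p, e)) = ∑ σ with σ 0 = p, f σ := by
  rw [Finset.sum_filter, ← decomposeFin.symm.sum_comp, Fintype.sum_prod_type]
  simp [decomposeFin_symm_apply_zero]

lemma sum_apply_zero_eq_swap_mul {n : ℕ} (p p' : Fin (n + 1)) (f : Perm (Fin (n + 1)) → ℝ) :
    ∑ σ with σ 0 = p', f σ = ∑ σ with σ 0 = p, f (swap p p' * σ) := by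
  rw [Finset.sum_filter, Finset.sum_filter, ← Equiv.sum_comp (Equiv.mulLeft (swap p p'))]
  simp [swap_apply_eq_iff]

theorem isSubgConst_of_isLip_permHammingDist {n : ℕ} {f : Perm (Fin (n + 1)) → ℝ}
    (hf : IsLip permHammingDist f) : IsSubgConst f n := by
  induction n with
  | zero =>
    simpa using isSubgConst_of_abs_sub_le (r := 0) fun x y => by
      rw [Subsingleton.elim x y, sub_self, abs_zero]
  | succ n ih =>
    set F : Fin (n + 2) → Perm (Fin (n + 1)) → ℝ := fun p e => f (decomposeFin.symm (p, e))
    have hfib : ∀ p, IsSubgConst (F p) n := fun p => ih fun e e' => by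
      simpa [F, permHammingDist_decomposeFin_symm] using
        hf (decomposeFin.symm (p, e)) (decomposeFin.symm (p, e'))
    have hosc : ∀ p p', |unifE (F p) - unifE (F p')| ≤ 2 := by
      intro p p'
      have hcoupling : unifE (F p') = unifE fun e => f (swap p p' * decomposeFin.symm (p, e)) := by
        rw [unifE, unifE, sum_decomposeFin_symm, sum_apply_zero_eq_swap_mul p p',
          ← sum_decomposeFin_symm p fun σ => f (swap p p' * σ)]
      rw [hcoupling]
      exact abs_unifE_sub_unifE_le fun e =>
        (hf _ _).trans (mod_cast permHammingDist_swap_mul_le p p' _)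
    have havg : IsSubgConst (fun p => unifE (F p)) 1 := by
      convert isSubgConst_of_abs_sub_le hosc
      norm_num
    push_cast
    exact IsSubgConst.of_fibers decomposeFin hfib havg

/-- The subgaussian constant of the symmetric group `S_n` with the Hamming distance
and uniform measure is at most `n - 1`. -/
theorem sgConst_symmetricGroup_le (n : ℕ) (hn : 1 ≤ n) :
    sgConst (permHammingDist (n := n)) ≤ (n : ℝ) - 1 := by
  obtain ⟨m, rfl⟩ := Nat.exists_eq_add_of_le' hn
  refine sgConst_le fun f hf => ?_
  simpa using isSubgConst_of_isLip_permHammingDist hf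
end

section
/- In the Boolean lattice {0,1}^n with R satisfying (c−1)n/(2(c+1)) > R ≥ 0 and c ≥ 2, the binomial coefficients satisfy C(n, ⌈n/2⌉−R+i+1)/C(n, ⌈n/2⌉−R+i) < c for all 0 ≤ i < R, and consequently Σ_{|j − n/2| ≤ R} C(n, j) < C(n, ⌈n/2⌉−R) · c^{R+2}. -/
open Finset

/-- For `n ≥ 3`, `c ≥ 2` and an integer `R` with `(c-1)n/(2(c+1)) > R`, consecutive
binomial-coefficient ratios `C(n, ⌈n/2⌉-R+i+1)/C(n, ⌈n/2⌉-R+i)` are `< c` for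
`0 ≤ i < R`, and `Σ_{|j - n/2| ≤ R} C(n,j) < C(n, ⌈n/2⌉-R) · c^{R+2}`. -/
theorem binomial_ratio_and_sum (n R : ℕ) (c : ℝ) (hn : 3 ≤ n) (hc : 2 ≤ c)
    (hR : (R : ℝ) < (c - 1) * n / (2 * (c + 1))) :
    (∀ i : ℕ, i < R →
      (Nat.choose n ((n + 1) / 2 - R + i + 1) : ℝ) /
        (Nat.choose n ((n + 1) / 2 - R + i) : ℝ) < c) ∧
    (∑ j ∈ Finset.range (n + 1),
        (if |(j : ℝ) - (n : ℝ) / 2| ≤ (R : ℝ) then (Nat.choose n j : ℝ) else 0))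
      < (Nat.choose n ((n + 1) / 2 - R) : ℝ) * c ^ (R + 2) := by
  have hc0 : (0:ℝ) < c := by linarith
  have hden : (0:ℝ) < 2 * (c + 1) := by linarith
  have hR' : (R:ℝ) * (2 * (c + 1)) < (c - 1) * n := (lt_div_iff₀ hden).mp hR
  have hnn : (0:ℝ) ≤ (n:ℝ) := Nat.cast_nonneg n
  have h2Rn : 2 * R < n := by
    have : (2:ℝ) * R < n := by nlinarith
    exact_mod_cast this
  -- key: ratio lemma
  have ratioA : ∀ i : ℕ, i < R →
      (Nat.choose n ((n + 1) / 2 - R + i + 1) : ℝ)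
        < c * (Nat.choose n ((n + 1) / 2 - R + i) : ℝ) := by
    intro i hi
    set k := (n + 1) / 2 - R + i with hkdef
    have hkn1 : k + 1 ≤ n := by omega
    have hkn : k ≤ n := by omega
    have hpos : (0:ℝ) < Nat.choose n k := by
      exact_mod_cast Nat.choose_pos hkn
    have h1 : Nat.choose n (k+1) * (k+1) = Nat.choose n k * (n - k) :=
      Nat.choose_succ_right_eq n k
    have h2 : (Nat.choose n (k+1) : ℝ) * (k+1) = (Nat.choose n k : ℝ) * ((n:ℝ) - k) := by
      rw [← Nat.cast_sub hkn]
      exact_mod_cast h1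
    -- k ≥ n/2 - R
    have hkR : k + R = (n+1)/2 + i := by omega
    have hkRr : (k:ℝ) + R = ((n+1)/2 : ℕ) + (i:ℕ) := by exact_mod_cast hkR
    have hm : (n:ℝ) ≤ 2 * (((n+1)/2 : ℕ) : ℝ) := by
      have : n ≤ 2 * ((n+1)/2) := by omega
      exact_mod_cast this
    have hkge : (n:ℝ)/2 - R ≤ (k:ℝ) := by
      have hi0 : (0:ℝ) ≤ (i:ℕ) := Nat.cast_nonneg i
      linarith
    have h3 : (n:ℝ) - k < c * ((k:ℝ)+1) := by
      nlinarith [mul_le_mul_of_nonneg_left hkge (by linarith : (0:ℝ) ≤ c + 1)]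
    have hk1pos : (0:ℝ) < (k:ℝ) + 1 := by positivity
    nlinarith [h2, mul_lt_mul_of_pos_left h3 hpos]
  have part1 : ∀ i : ℕ, i < R →
      (Nat.choose n ((n + 1) / 2 - R + i + 1) : ℝ) /
        (Nat.choose n ((n + 1) / 2 - R + i) : ℝ) < c := by
    intro i hi
    have hpos : (0:ℝ) < Nat.choose n ((n + 1) / 2 - R + i) := by
      exact_mod_cast Nat.choose_pos (by omega)
    rw [div_lt_iff₀ hpos]
    exact ratioA i hi
  refine ⟨part1, ?_⟩
  -- chain bound
  have chainB : ∀ i : ℕ, i ≤ R →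
      (Nat.choose n ((n + 1) / 2 - R + i) : ℝ)
        ≤ c ^ i * (Nat.choose n ((n + 1) / 2 - R) : ℝ) := by
    intro i hi
    induction i with
    | zero => simp
    | succ i ih =>
      have h1 := ratioA i (by omega)
      have h2 := ih (by omega)
      have he : (n + 1) / 2 - R + (i+1) = (n + 1) / 2 - R + i + 1 := by omega
      rw [he]
      calc (Nat.choose n ((n + 1) / 2 - R + i + 1) : ℝ)
          ≤ c * (Nat.choose n ((n + 1) / 2 - R + i) : ℝ) := le_of_lt h1
        _ ≤ c * (c ^ i * (Nat.choose n ((n + 1) / 2 - R) : ℝ)) :=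
            mul_le_mul_of_nonneg_left h2 hc0.le
        _ = c ^ (i+1) * (Nat.choose n ((n + 1) / 2 - R) : ℝ) := by ring
  have hC : (0:ℝ) < (Nat.choose n ((n + 1) / 2 - R) : ℝ) := by
    exact_mod_cast Nat.choose_pos (by omega)
  have geom : ∀ t : ℕ, (∑ i ∈ Finset.range t, c ^ i) ≤ c ^ t - 1 := by
    intro t
    induction t with
    | zero => simp
    | succ t ih =>
      rw [Finset.sum_range_succ, pow_succ]
      nlinarith [pow_pos hc0 t]
  -- notation
  set K := (n + 1) / 2 - R with hKdef
  set h := n / 2 with hhdef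
  -- rewrite sum as filter
  rw [← Finset.sum_filter]
  have hsub : (Finset.range (n+1)).filter (fun j : ℕ => |(j:ℝ) - (n:ℝ)/2| ≤ (R:ℝ))
      ⊆ Finset.Icc K (n - K) := by
    intro j hj
    simp only [Finset.mem_filter, Finset.mem_range] at hj
    obtain ⟨hj1, hj2⟩ := hj
    rw [abs_le] at hj2
    obtain ⟨ha, hb⟩ := hj2
    have h1 : (n:ℝ) ≤ 2*(j:ℝ) + 2*(R:ℝ) := by linarith
    have h2 : 2*(j:ℝ) ≤ (n:ℝ) + 2*(R:ℝ) := by linarith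
    have h1' : n ≤ 2*j + 2*R := by exact_mod_cast h1
    have h2' : 2*j ≤ n + 2*R := by exact_mod_cast h2
    simp only [Finset.mem_Icc]
    omega
  have step1 : (∑ j ∈ (Finset.range (n+1)).filter (fun j : ℕ => |(j:ℝ) - (n:ℝ)/2| ≤ (R:ℝ)),
        (Nat.choose n j : ℝ))
      ≤ ∑ j ∈ Finset.Icc K (n - K), (Nat.choose n j : ℝ) :=
    Finset.sum_le_sum_of_subset_of_nonneg hsub (fun j _ _ => Nat.cast_nonneg _)
  have hsplit : Finset.Icc K (n - K) ⊆ Finset.Icc K h ∪ Finset.Icc (h+1) (n - K) := by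
    intro j hj
    simp only [Finset.mem_Icc, Finset.mem_union] at *
    omega
  have hdisj : Disjoint (Finset.Icc K h) (Finset.Icc (h+1) (n - K)) := by
    rw [Finset.disjoint_left]
    intro j hj1 hj2
    simp only [Finset.mem_Icc] at *
    omega
  have step2 : (∑ j ∈ Finset.Icc K (n - K), (Nat.choose n j : ℝ))
      ≤ (∑ j ∈ Finset.Icc K h, (Nat.choose n j : ℝ))
        + ∑ j ∈ Finset.Icc (h+1) (n - K), (Nat.choose n j : ℝ) := by
    rw [← Finset.sum_union hdisj]
    exact Finset.sum_le_sum_of_subset_of_nonneg hsplit (fun j _ _ => Nat.cast_nonneg _)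
  -- first block
  have hnm : h + (n+1)/2 = n := by omega
  have hKR : K + R = (n+1)/2 := by omega
  have sum1 : (∑ j ∈ Finset.Icc K h, (Nat.choose n j : ℝ))
      ≤ (c ^ (R+1) - 1) * (Nat.choose n K : ℝ) := by
    rw [← Finset.Ico_add_one_right_eq_Icc, Finset.sum_Ico_eq_sum_range]
    have hb : ∀ i ∈ Finset.range (h + 1 - K), (Nat.choose n (K + i) : ℝ)
        ≤ c ^ i * (Nat.choose n K : ℝ) := by
      intro i hi
      simp only [Finset.mem_range] at hi
      exact chainB i (by omega)
    calc (∑ i ∈ Finset.range (h + 1 - K), (Nat.choose n (K + i) : ℝ))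
        ≤ ∑ i ∈ Finset.range (h + 1 - K), c ^ i * (Nat.choose n K : ℝ) :=
          Finset.sum_le_sum hb
      _ = (∑ i ∈ Finset.range (h + 1 - K), c ^ i) * (Nat.choose n K : ℝ) := by
          rw [Finset.sum_mul]
      _ ≤ (c ^ (h + 1 - K) - 1) * (Nat.choose n K : ℝ) :=
          mul_le_mul_of_nonneg_right (geom _) hC.le
      _ ≤ (c ^ (R+1) - 1) * (Nat.choose n K : ℝ) := by
          apply mul_le_mul_of_nonneg_right _ hC.le
          have : c ^ (h + 1 - K) ≤ c ^ (R + 1) :=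
            pow_le_pow_right₀ (by linarith) (by omega)
          linarith
  -- second block
  have sum2 : (∑ j ∈ Finset.Icc (h+1) (n - K), (Nat.choose n j : ℝ))
      ≤ (c ^ R - 1) * (Nat.choose n K : ℝ) := by
    rw [← Finset.Ico_add_one_right_eq_Icc, Finset.sum_Ico_eq_sum_range]
    have ht : n - K + 1 - (h + 1) = R := by omega
    rw [ht]
    have hb : ∀ i ∈ Finset.range R, (Nat.choose n (h + 1 + i) : ℝ)
        ≤ c ^ (R - 1 - i) * (Nat.choose n K : ℝ) := by
      intro i hi
      simp only [Finset.mem_range] at hi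
      have hsym : Nat.choose n (h + 1 + i) = Nat.choose n (K + (R - 1 - i)) := by
        have h1 : h + 1 + i ≤ n := by omega
        have h2 : n - (h + 1 + i) = K + (R - 1 - i) := by omega
        rw [← h2, Nat.choose_symm h1]
      rw [hsym]
      exact chainB (R - 1 - i) (by omega)
    calc (∑ i ∈ Finset.range R, (Nat.choose n (h + 1 + i) : ℝ))
        ≤ ∑ i ∈ Finset.range R, c ^ (R - 1 - i) * (Nat.choose n K : ℝ) :=
          Finset.sum_le_sum hb
      _ = (∑ i ∈ Finset.range R, c ^ (R - 1 - i)) * (Nat.choose n K : ℝ) := by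
          rw [Finset.sum_mul]
      _ = (∑ i ∈ Finset.range R, c ^ i) * (Nat.choose n K : ℝ) := by
          rw [Finset.sum_range_reflect (fun i => c ^ i) R]
      _ ≤ (c ^ R - 1) * (Nat.choose n K : ℝ) :=
          mul_le_mul_of_nonneg_right (geom R) hC.le
  -- combine
  have hfin : (c ^ (R+1) - 1) * (Nat.choose n K : ℝ) + (c ^ R - 1) * (Nat.choose n K : ℝ)
      < (Nat.choose n K : ℝ) * c ^ (R + 2) := by
    have hlt : c ^ (R+1) + c ^ R - 2 < c ^ (R+2) := by
      have e1 : c ^ (R+1) = c * c ^ R := by ring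
      have e2 : c ^ (R+2) = c * (c * c ^ R) := by ring
      have hcc : c + 1 ≤ c * c := by nlinarith
      have ha0 : (0:ℝ) < c ^ R := pow_pos hc0 R
      nlinarith [mul_le_mul_of_nonneg_right hcc ha0.le]
    calc (c ^ (R+1) - 1) * (Nat.choose n K : ℝ) + (c ^ R - 1) * (Nat.choose n K : ℝ)
        = (c ^ (R+1) + c ^ R - 2) * (Nat.choose n K : ℝ) := by ring
      _ < c ^ (R+2) * (Nat.choose n K : ℝ) := by
          exact mul_lt_mul_of_pos_right hlt hC
      _ = (Nat.choose n K : ℝ) * c ^ (R+2) := by ring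
  calc (∑ j ∈ (Finset.range (n+1)).filter (fun j : ℕ => |(j:ℝ) - (n:ℝ)/2| ≤ (R:ℝ)),
        (Nat.choose n j : ℝ))
      ≤ _ := step1
    _ ≤ _ := step2
    _ ≤ (c ^ (R+1) - 1) * (Nat.choose n K : ℝ) + (c ^ R - 1) * (Nat.choose n K : ℝ) :=
        add_le_add sum1 sum2
    _ < _ := hfin
end

section
/- The convex closure of any ball of positive radius in the hypercube {0,1}^n (under Hamming distance, with convexity meaning closure under midpoints) is the entire hypercube. -/
open Finset
open scoped symmDiff

/-- A set of points of the hypercube (Boolean lattice) is midpoint-closed if it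
contains every exact midpoint of a pair of its own points at even distance. -/
def MidClosed {d : ℕ} (S : Set (Finset (Fin d))) : Prop :=
  ∀ α ∈ S, ∀ β ∈ S, ∀ γ : Finset (Fin d),
    (α ∆ γ).card = (γ ∆ β).card → 2 * (α ∆ γ).card = (α ∆ β).card → γ ∈ S

/-- The convex closure of a set: the smallest midpoint-closed superset. -/
def convClosure {d : ℕ} (A : Set (Finset (Fin d))) : Set (Finset (Fin d)) :=
  ⋂₀ {S | A ⊆ S ∧ MidClosed S}

lemma symmDiff_singleton_of_mem {d : ℕ} {s : Finset (Fin d)} {i : Fin d}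
    (hi : i ∈ s) : s ∆ ({i} : Finset (Fin d)) = s.erase i := by
  ext a
  by_cases h : a = i <;> simp [Finset.mem_symmDiff, h, hi]

lemma mem_of_midClosed {d : ℕ} (x : Finset (Fin d)) (r : ℕ) (hr : 1 ≤ r)
    (S : Set (Finset (Fin d))) (hA : {γ : Finset (Fin d) | (x ∆ γ).card ≤ r} ⊆ S)
    (hS : MidClosed S) : ∀ γ, γ ∈ S := by
  suffices H : ∀ n (γ : Finset (Fin d)), (x ∆ γ).card = n → γ ∈ S by
    exact fun γ => H _ γ rfl
  intro n
  induction n using Nat.strong_induction_on with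
  | _ n ih =>
    intro γ hγ
    by_cases h1 : (x ∆ γ).card ≤ 1
    · exact hA (le_trans h1 hr)
    · push_neg at h1
      obtain ⟨i, hi, j, hj, hij⟩ := Finset.one_lt_card.mp h1
      set α := γ ∆ ({i} : Finset (Fin d)) with hαdef
      set β := γ ∆ ({j} : Finset (Fin d)) with hβdef
      have hxi : i ∈ x ∆ γ := hi
      have hxj : j ∈ x ∆ γ := hj
      have hcardα : (x ∆ α).card = n - 1 := by
        rw [hαdef, ← symmDiff_assoc, symmDiff_singleton_of_mem hxi,
          Finset.card_erase_of_mem hxi, hγ]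
      have hcardβ : (x ∆ β).card = n - 1 := by
        rw [hβdef, ← symmDiff_assoc, symmDiff_singleton_of_mem hxj,
          Finset.card_erase_of_mem hxj, hγ]
      have hn2 : 2 ≤ n := by omega
      have hα : α ∈ S := ih (n - 1) (by omega) α hcardα
      have hβ : β ∈ S := ih (n - 1) (by omega) β hcardβ
      have hαγ : α ∆ γ = ({i} : Finset (Fin d)) := by
        rw [hαdef, symmDiff_comm γ, symmDiff_assoc, symmDiff_self,
          symmDiff_bot]
      have hγβ : γ ∆ β = ({j} : Finset (Fin d)) := by
        rw [hβdef, ← symmDiff_assoc, symmDiff_self, bot_symmDiff]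
      have hαβ : α ∆ β = ({i, j} : Finset (Fin d)) := by
        rw [hαdef, hβdef]
        ext a
        by_cases h1 : a = i <;> by_cases h2 : a = j <;>
          simp [Finset.mem_symmDiff, h1, h2, hij] <;> tauto
      refine hS α hα β hβ γ ?_ ?_
      · rw [hαγ, hγβ]; simp
      · rw [hαγ, hαβ]
        simp [Finset.card_insert_of_notMem, hij]

/-- The convex closure of any ball of positive radius in the hypercube is the
whole space. -/
theorem convClosure_ball_eq_univ (d : ℕ) (x : Finset (Fin d)) (r : ℕ) (hr : 1 ≤ r) :
    convClosure {γ : Finset (Fin d) | (x ∆ γ).card ≤ r} = Set.univ := by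
  ext γ
  simp only [Set.mem_univ, iff_true, convClosure, Set.mem_sInter, Set.mem_setOf_eq]
  rintro S ⟨hA, hS⟩
  exact mem_of_midClosed x r hr S hA hS γ
end

section
/- If A and B are nonempty subsets of the hypercube and C is the convex closure of the set m(A,B) of all midpoints between points of A and points of B (at even distance), then A ∪ B ⊆ C, provided every pair α∈A, β∈B is at even distance. (In the general statement, A ∪ B is contained in the convex closure of the discrete midpoint set.) -/
open Finset
open scoped symmDiff

lemma sd_key {d : ℕ} (a b s : Finset (Fin d)) (h : s ⊆ a ∆ b) :
    (a ∆ s) ∆ b = (a ∆ b) \ s := by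
  rw [symmDiff_comm a s, symmDiff_assoc, symmDiff_of_le h]

lemma both_mem {d : ℕ} (S : Set (Finset (Fin d))) (hMC : MidClosed S)
    (a b : Finset (Fin d)) (he : Even ((a ∆ b).card))
    (hm : ∀ γ, (a ∆ γ).card = (γ ∆ b).card → 2 * (a ∆ γ).card = (a ∆ b).card → γ ∈ S) :
    a ∈ S ∧ b ∈ S := by
  obtain ⟨k, hk⟩ := he
  obtain ⟨s, hs, hsc⟩ := (a ∆ b).exists_subset_card_eq (n := k) (by omega)
  set t := (a ∆ b) \ s with ht
  have hts : t ⊆ a ∆ b := sdiff_subset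
  have htc : t.card = k := by rw [ht, card_sdiff_of_subset hs]; omega
  have hdisj : Disjoint s t := disjoint_sdiff
  have h1a : a ∆ (a ∆ s) = s := symmDiff_symmDiff_cancel_left a s
  have h2a : a ∆ (a ∆ t) = t := symmDiff_symmDiff_cancel_left a t
  have h1b : (a ∆ s) ∆ b = t := sd_key a b s hs
  have h2b : (a ∆ t) ∆ b = s := by
    rw [sd_key a b t hts, ht, sdiff_sdiff_right_self]
    exact inf_eq_right.mpr hs
  have h12 : (a ∆ s) ∆ (a ∆ t) = a ∆ b := by
    rw [symmDiff_comm a s, symmDiff_assoc, symmDiff_symmDiff_cancel_left,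
      hdisj.symmDiff_eq_sup]
    exact union_sdiff_of_subset hs
  have hγ1 : a ∆ s ∈ S := hm _ (by rw [h1a, h1b, hsc, htc]) (by rw [h1a, hsc]; omega)
  have hγ2 : a ∆ t ∈ S := hm _ (by rw [h2a, h2b, hsc, htc]) (by rw [h2a, htc]; omega)
  constructor
  · exact hMC _ hγ1 _ hγ2 a
      (by rw [symmDiff_comm _ a, h1a, h2a, hsc, htc])
      (by rw [symmDiff_comm _ a, h1a, h12, hsc]; omega)
  · exact hMC _ hγ1 _ hγ2 b
      (by rw [h1b, symmDiff_comm b, h2b, hsc, htc])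
      (by rw [h1b, h12, htc]; omega)

/-- If `A, B` are nonempty subsets of the hypercube with every pair `a ∈ A`, `b ∈ B`
at even distance, then `A ∪ B` is contained in the convex closure of the set of
midpoints between `A` and `B`. -/
theorem union_subset_convClosure_midpoints (d : ℕ) (A B : Set (Finset (Fin d)))
    (hA : A.Nonempty) (hB : B.Nonempty)
    (heven : ∀ a ∈ A, ∀ b ∈ B, Even ((a ∆ b).card)) :
    A ∪ B ⊆ convClosure {γ : Finset (Fin d) | ∃ a ∈ A, ∃ b ∈ B,
      (a ∆ γ).card = (γ ∆ b).card ∧ 2 * (a ∆ γ).card = (a ∆ b).card} := by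
  intro x hx S hS
  obtain ⟨hMS, hMC⟩ := hS
  rcases hx with hxA | hxB
  · obtain ⟨b, hb⟩ := hB
    exact (both_mem S hMC x b (heven x hxA b hb)
      (fun γ h1 h2 => hMS ⟨x, hxA, b, hb, h1, h2⟩)).1
  · obtain ⟨a, ha⟩ := hA
    exact (both_mem S hMC a x (heven a ha x hxB)
      (fun γ h1 h2 => hMS ⟨a, ha, x, hxB, h1, h2⟩)).2
end

section
/- In the 12-dimensional hypercube, let A = {α : α ⊆ {1,2,3,4}} and B = {β : {1,…,8} ⊆ β ⊆ {1,…,12}}. Then A and B are each closed under midpoints (convex), every γ ∈ m̂_{1/4}(A,B) satisfies 2 ≤ |γ| ≤ 6, yet the set {1,2,3,4,8,9,10,11,12} (of size 9) lies in m̂(A, m̂(A,B)). Hence m̂(A, m̂(A,B)) ⊄ m̂_{1/4}(A,B). -/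
open Finset
open scoped symmDiff

/-- Hamming (symmetric-difference) distance on the Boolean lattice. -/
def bdist {d : ℕ} (a b : Finset (Fin d)) : ℕ := (a ∆ b).card

/-- Discrete midpoint set `m̂_{1/2}(a,b)`: geodesic points at distance
`⌊d(a,b)/2⌋` or `⌈d(a,b)/2⌉` from `a`. -/
def mhalf {d : ℕ} (a b : Finset (Fin d)) : Set (Finset (Fin d)) :=
  {u | bdist a u + bdist u b = bdist a b ∧
    (bdist a u = bdist a b / 2 ∨ bdist a u = (bdist a b + 1) / 2)}

/-- Discrete midpoint set `m̂_{1/4}(a,b)`: geodesic points at distance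
`⌊d(a,b)/4⌋` or `⌈d(a,b)/4⌉` from `a`. -/
def mquarter {d : ℕ} (a b : Finset (Fin d)) : Set (Finset (Fin d)) :=
  {u | bdist a u + bdist u b = bdist a b ∧
    (bdist a u = bdist a b / 4 ∨ bdist a u = (bdist a b + 3) / 4)}

/-- Setwise midpoints. -/
def mhalfS {d : ℕ} (A B : Set (Finset (Fin d))) : Set (Finset (Fin d)) :=
  {u | ∃ a ∈ A, ∃ b ∈ B, u ∈ mhalf a b}

def mquarterS {d : ℕ} (A B : Set (Finset (Fin d))) : Set (Finset (Fin d)) :=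
  {u | ∃ a ∈ A, ∃ b ∈ B, u ∈ mquarter a b}

/-- `A = {α ⊆ {1,2,3,4}}` in the 12-hypercube. -/
def Aset : Set (Finset (Fin 12)) := {α | α ⊆ ({0, 1, 2, 3} : Finset (Fin 12))}

/-- `B = {β ⊇ {1,…,8}}` in the 12-hypercube. -/
def Bset : Set (Finset (Fin 12)) := {β | ({0, 1, 2, 3, 4, 5, 6, 7} : Finset (Fin 12)) ⊆ β}

lemma between_iff {d : ℕ} (a u b : Finset (Fin d)) :
    bdist a u + bdist u b = bdist a b ↔ a ∩ b ⊆ u ∧ u ⊆ a ∪ b := by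
  have h1 : ((a ∆ u) ∩ (u ∆ b) = ∅) ↔ a ∩ b ⊆ u ∧ u ⊆ a ∪ b := by
    simp only [Finset.eq_empty_iff_forall_notMem, Finset.mem_inter, Finset.mem_symmDiff,
      Finset.subset_iff, Finset.mem_inter, Finset.mem_union]
    constructor
    · intro h
      refine ⟨fun {x} hx => ?_, fun {x} hx => ?_⟩
      · by_contra hxu; exact h x (by tauto)
      · by_contra hxab; push_neg at hxab; exact h x (by tauto)
    · rintro ⟨g1, g2⟩ x hx
      have := @g1 x; have := @g2 x; tauto
  have hsd : (a ∆ u) ∆ (u ∆ b) = a ∆ b := by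
    rw [symmDiff_assoc, symmDiff_symmDiff_cancel_left]
  have hcard : ((a ∆ u) ∪ (u ∆ b)).card + ((a ∆ u) ∩ (u ∆ b)).card
      = (a ∆ u).card + (u ∆ b).card := Finset.card_union_add_card_inter _ _
  have h2 : (a ∆ b).card = ((a ∆ u) ∪ (u ∆ b)).card - ((a ∆ u) ∩ (u ∆ b)).card := by
    rw [← hsd, symmDiff_eq_sup_sdiff_inf]
    exact Finset.card_sdiff_of_subset (Finset.inter_subset_union)
  have h3 : ((a ∆ u) ∩ (u ∆ b)).card ≤ ((a ∆ u) ∪ (u ∆ b)).card :=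
    Finset.card_le_card Finset.inter_subset_union
  rw [← h1, ← Finset.card_eq_zero]
  unfold bdist
  omega

lemma bdist_of_subset {d : ℕ} {a b : Finset (Fin d)} (h : a ⊆ b) :
    bdist a b = b.card - a.card := by
  have : a ∆ b = b \ a := by
    ext x
    simp only [Finset.mem_symmDiff, Finset.mem_sdiff]
    have := @h x; tauto
  rw [bdist, this, Finset.card_sdiff_of_subset h]

/-- In the 12-hypercube, `A` and `B` are convex (midpoint-closed), every
`γ ∈ m̂_{1/4}(A,B)` has `2 ≤ |γ| ≤ 6`, yet the 9-element set
`{1,2,3,4,8,9,10,11,12}` lies in `m̂(A, m̂(A,B))`; hence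
`m̂(A, m̂(A,B)) ⊄ m̂_{1/4}(A,B)`. -/
theorem iterated_midpoints_counterexample :
    mhalfS Aset Aset ⊆ Aset ∧
    mhalfS Bset Bset ⊆ Bset ∧
    (∀ γ ∈ mquarterS Aset Bset, 2 ≤ γ.card ∧ γ.card ≤ 6) ∧
    ({0, 1, 2, 3, 7, 8, 9, 10, 11} : Finset (Fin 12)) ∈ mhalfS Aset (mhalfS Aset Bset) ∧
    ¬ (mhalfS Aset (mhalfS Aset Bset) ⊆ mquarterS Aset Bset) := by
  have partA : mhalfS Aset Aset ⊆ Aset := by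
    rintro u ⟨a, ha, b, hb, hbet, _⟩
    have := (between_iff a u b).mp hbet
    exact this.2.trans (Finset.union_subset ha hb)
  have partB : mhalfS Bset Bset ⊆ Bset := by
    rintro u ⟨a, ha, b, hb, hbet, _⟩
    have := (between_iff a u b).mp hbet
    exact (Finset.subset_inter ha hb).trans this.1
  have partQ : ∀ γ ∈ mquarterS Aset Bset, 2 ≤ γ.card ∧ γ.card ≤ 6 := by
    rintro γ ⟨a, ha, b, hb, hbet, hdist⟩
    have hab : a ⊆ b := ha.trans ((by decide : ({0,1,2,3} : Finset (Fin 12)) ⊆ {0,1,2,3,4,5,6,7}).trans hb)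
    obtain ⟨hlow, hup⟩ := (between_iff a γ b).mp hbet
    have haγ : a ⊆ γ := by rwa [Finset.inter_eq_left.mpr hab] at hlow
    have hγb : γ ⊆ b := hup.trans (Finset.union_subset hab Finset.Subset.rfl)
    have e1 : bdist a b = b.card - a.card := bdist_of_subset hab
    have e2 : bdist a γ = γ.card - a.card := bdist_of_subset haγ
    have c1 : a.card ≤ 4 := by
      have := Finset.card_le_card ha; simpa using this
    have c2 : 8 ≤ b.card := by
      have := Finset.card_le_card hb; simpa using this
    have c3 : b.card ≤ 12 := by
      have := Finset.card_le_univ b; simpa using this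
    have c4 : a.card ≤ γ.card := Finset.card_le_card haγ
    have c5 : γ.card ≤ b.card := Finset.card_le_card hγb
    rw [e1, e2] at hdist
    omega
  have partW : ({0, 1, 2, 3, 7, 8, 9, 10, 11} : Finset (Fin 12)) ∈ mhalfS Aset (mhalfS Aset Bset) := by
    have m1 : ({0,1,2,3} : Finset (Fin 12)) ∈ Aset :=
      show ({0,1,2,3} : Finset (Fin 12)) ⊆ {0,1,2,3} by decide
    have m2 : (∅ : Finset (Fin 12)) ∈ Aset :=
      show (∅ : Finset (Fin 12)) ⊆ {0,1,2,3} by decide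
    have m3 : (Finset.univ : Finset (Fin 12)) ∈ Bset :=
      show ({0,1,2,3,4,5,6,7} : Finset (Fin 12)) ⊆ Finset.univ by decide
    exact ⟨{0,1,2,3}, m1, {4,7,8,9,10,11}, ⟨∅, m2, Finset.univ, m3, by decide, by decide⟩,
      by decide, by decide⟩
  refine ⟨partA, partB, partQ, partW, ?_⟩
  intro h
  have h6 := (partQ _ (h partW)).2
  have h9 : ({0, 1, 2, 3, 7, 8, 9, 10, 11} : Finset (Fin 12)).card = 9 := by decide
  omega
end

section
/- Let τ be an optimal transportation (minimizing the sum Σ τ(a,b)·d(a,b)² ) between probability measures μ_A, μ_B on a finite metric graph. If τ(a₁,b₁) > 0, τ(a₂,b₂) > 0, and the discrete midpoint sets of (a₁,b₁) and (a₂,b₂) intersect, then d(a₁,b₁) = d(a₂,b₂). -/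
open Finset

variable {V : Type*} [Fintype V]

/-- `τ` is a transportation from `μA` to `μB`. -/
def IsTransport (τ : V → V → ℝ) (μA μB : V → ℝ) : Prop :=
  (∀ a b, 0 ≤ τ a b) ∧ (∀ a, ∑ b, τ a b = μA a) ∧ (∀ b, ∑ a, τ a b = μB b)

/-- Quadratic Wasserstein cost of `τ` with respect to distance `dist`. -/
noncomputable def cost2 (dist : V → V → ℕ) (τ : V → V → ℝ) : ℝ :=
  ∑ a, ∑ b, τ a b * ((dist a b : ℝ)) ^ 2

/-- `τ` is an optimal (W²-minimizing) transportation from `μA` to `μB`. -/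
def IsOptimalTransport (dist : V → V → ℕ) (τ : V → V → ℝ) (μA μB : V → ℝ) : Prop :=
  IsTransport τ μA μB ∧
    ∀ τ' : V → V → ℝ, IsTransport τ' μA μB → cost2 dist τ ≤ cost2 dist τ'

/-- The discrete midpoint set `m̃(a,b)` of a graph `G`, encoded as a set of pairs:
for even distance, diagonal pairs `(u,u)` with `2 d(u,a) = 2 d(u,b) = d(a,b)`;
for odd distance, edges `(u,v)` with `2 d(u,a) + 1 = 2 d(v,b) + 1 = d(a,b)`. -/
def mtil (G : SimpleGraph V) (a b : V) : Set (V × V) :=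
  {p | (p.1 = p.2 ∧ 2 * G.dist p.1 a = G.dist a b ∧ 2 * G.dist p.1 b = G.dist a b) ∨
       (G.Adj p.1 p.2 ∧ 2 * G.dist p.1 a + 1 = G.dist a b ∧
        2 * G.dist p.2 b + 1 = G.dist a b)}

/-!
Moving a mass `ε ≤ min (τ a₁ b₁) (τ a₂ b₂)` from the pairs `(a₁,b₁), (a₂,b₂)` to the crossed pairs
`(a₁,b₂), (a₂,b₁)` gives another transportation, so optimality yields
`d(a₁,b₁)² + d(a₂,b₂)² ≤ d(a₁,b₂)² + d(a₂,b₁)²`. Routing through a common midpoint, the triangle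
inequality bounds each crossed distance by `(d(a₁,b₁) + d(a₂,b₂)) / 2`, and then the two
inequalities together force `(d(a₁,b₁) - d(a₂,b₂))² ≤ 0`.
-/

theorem cost2_add_smul (dist : V → V → ℕ) (τ σ : V → V → ℝ) (ε : ℝ) :
    cost2 dist (τ + ε • σ) = cost2 dist τ + ε * cost2 dist σ := by
  simp only [cost2, Pi.add_apply, Pi.smul_apply, smul_eq_mul, add_mul, sum_add_distrib, mul_sum,
    mul_assoc]

section Exchange

variable [DecidableEq V]

def swapPlan (a₁ b₁ a₂ b₂ : V) (x y : V) : ℝ :=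
  (if x = a₁ ∧ y = b₂ then 1 else 0) + (if x = a₂ ∧ y = b₁ then 1 else 0) -
    (if x = a₁ ∧ y = b₁ then 1 else 0) - (if x = a₂ ∧ y = b₂ then 1 else 0)

theorem sum_swapPlan_right (a₁ b₁ a₂ b₂ x : V) : ∑ y, swapPlan a₁ b₁ a₂ b₂ x y = 0 := by
  simp only [swapPlan, sum_sub_distrib, sum_add_distrib, ite_and]
  simp

theorem sum_swapPlan_left (a₁ b₁ a₂ b₂ y : V) : ∑ x, swapPlan a₁ b₁ a₂ b₂ x y = 0 := by
  simp only [swapPlan, sum_sub_distrib, sum_add_distrib, ite_and]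
  simp [sum_ite_eq']

theorem cost2_swapPlan (dist : V → V → ℕ) (a₁ b₁ a₂ b₂ : V) :
    cost2 dist (swapPlan a₁ b₁ a₂ b₂) =
      (dist a₁ b₂ : ℝ) ^ 2 + (dist a₂ b₁ : ℝ) ^ 2 - (dist a₁ b₁ : ℝ) ^ 2 - (dist a₂ b₂ : ℝ) ^ 2 := by
  simp only [cost2, swapPlan, sub_mul, add_mul, sum_sub_distrib, sum_add_distrib, ite_and,
    ite_mul, one_mul, zero_mul]
  simp

theorem IsTransport.add_smul_swapPlan {τ : V → V → ℝ} {μA μB : V → ℝ}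
    (hτ : IsTransport τ μA μB) {ε : ℝ} {a₁ b₁ a₂ b₂ : V} (hε : 0 ≤ ε) (h₁ : ε ≤ τ a₁ b₁)
    (h₂ : ε ≤ τ a₂ b₂) : IsTransport (τ + ε • swapPlan a₁ b₁ a₂ b₂) μA μB := by
  obtain ⟨hnonneg, hrow, hcol⟩ := hτ
  refine ⟨fun x y => ?_, fun x => ?_, fun y => ?_⟩
  · -- `swapPlan` is negative only at `(a₁,b₁)` and `(a₂,b₂)`, and never below `-1`.
    have := hnonneg x y
    simp only [Pi.add_apply, Pi.smul_apply, smul_eq_mul, swapPlan]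
    split_ifs <;> grind
  · simp [sum_add_distrib, ← mul_sum, hrow, sum_swapPlan_right]
  · simp [sum_add_distrib, ← mul_sum, hcol, sum_swapPlan_left]

end Exchange

theorem IsOptimalTransport.dist_sq_add_dist_sq_le {dist : V → V → ℕ} {τ : V → V → ℝ}
    {μA μB : V → ℝ} (hopt : IsOptimalTransport dist τ μA μB) {a₁ b₁ a₂ b₂ : V} (h₁ : 0 < τ a₁ b₁)
    (h₂ : 0 < τ a₂ b₂) :
    dist a₁ b₁ ^ 2 + dist a₂ b₂ ^ 2 ≤ dist a₁ b₂ ^ 2 + dist a₂ b₁ ^ 2 := by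
  classical
  set ε := min (τ a₁ b₁) (τ a₂ b₂)
  have hε : 0 < ε := lt_min h₁ h₂
  have hle := hopt.2 _ (hopt.1.add_smul_swapPlan hε.le (min_le_left _ _) (min_le_right _ _))
  rw [cost2_add_smul, cost2_swapPlan, le_add_iff_nonneg_right, mul_nonneg_iff_of_pos_left hε,
    sub_sub, sub_nonneg] at hle
  exact_mod_cast hle

theorem Nat.eq_of_sq_add_sq_le_of_two_mul_le {m n x y : ℕ} (h : m ^ 2 + n ^ 2 ≤ x ^ 2 + y ^ 2)
    (hx : 2 * x ≤ m + n) (hy : 2 * y ≤ m + n) : m = n := by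
  nlinarith

-- `G.dist p.1 p.2` is `0` for the diagonal pairs and `1` for the edges, so this covers both parities.
theorem two_mul_dist_add_dist_eq_of_mem_mtil {W : Type*} {G : SimpleGraph W} {a b : W}
    {p : W × W} (hp : p ∈ mtil G a b) :
    2 * G.dist a p.1 + G.dist p.1 p.2 = G.dist a b ∧
      2 * G.dist p.2 b + G.dist p.1 p.2 = G.dist a b := by
  rcases hp with ⟨hdiag, ha, hb⟩ | ⟨hadj, ha, hb⟩
  · rw [← hdiag, SimpleGraph.dist_self, G.dist_comm]
    omega
  · rw [SimpleGraph.dist_eq_one_iff_adj.mpr hadj, G.dist_comm]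
    omega

theorem two_mul_dist_le_of_mem_mtil {W : Type*} {G : SimpleGraph W} (hG : G.Connected)
    {a₁ b₁ a₂ b₂ : W} {p : W × W} (h₁ : p ∈ mtil G a₁ b₁) (h₂ : p ∈ mtil G a₂ b₂) :
    2 * G.dist a₁ b₂ ≤ G.dist a₁ b₁ + G.dist a₂ b₂ := by
  have := two_mul_dist_add_dist_eq_of_mem_mtil h₁
  have := two_mul_dist_add_dist_eq_of_mem_mtil h₂
  have h₃ : G.dist a₁ b₂ ≤ G.dist a₁ p.1 + G.dist p.1 b₂ := hG.dist_triangle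
  have h₄ : G.dist p.1 b₂ ≤ G.dist p.1 p.2 + G.dist p.2 b₂ := hG.dist_triangle
  omega

theorem optimal_support_midpoints_same_dist_general (G : SimpleGraph V) (hG : G.Connected)
    (μA μB : V → ℝ)
    (τ : V → V → ℝ) (hopt : IsOptimalTransport G.dist τ μA μB)
    (a₁ b₁ a₂ b₂ : V) (h1 : 0 < τ a₁ b₁) (h2 : 0 < τ a₂ b₂)
    (hm : (mtil G a₁ b₁ ∩ mtil G a₂ b₂).Nonempty) :
    G.dist a₁ b₁ = G.dist a₂ b₂ := by
  obtain ⟨p, hp₁, hp₂⟩ := hm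
  refine Nat.eq_of_sq_add_sq_le_of_two_mul_le (hopt.dist_sq_add_dist_sq_le h1 h2)
    (two_mul_dist_le_of_mem_mtil hG hp₁ hp₂) ?_
  rw [add_comm]
  exact two_mul_dist_le_of_mem_mtil hG hp₂ hp₁

/-- If `τ` is an optimal transportation between probability measures on a finite
connected graph, two support pairs whose midpoint sets intersect are at equal
distance. -/
theorem optimal_support_midpoints_same_dist (G : SimpleGraph V) (hG : G.Connected)
    (μA μB : V → ℝ) (hμA : ∑ a, μA a = 1) (hμB : ∑ b, μB b = 1)
    (τ : V → V → ℝ) (hopt : IsOptimalTransport G.dist τ μA μB)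
    (a₁ b₁ a₂ b₂ : V) (h1 : 0 < τ a₁ b₁) (h2 : 0 < τ a₂ b₂)
    (hm : (mtil G a₁ b₁ ∩ mtil G a₂ b₂).Nonempty) :
    G.dist a₁ b₁ = G.dist a₂ b₂ :=
  optimal_support_midpoints_same_dist_general G hG μA μB τ hopt a₁ b₁ a₂ b₂ h1 h2 hm
end
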